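/- Let a, ν, v, w : ℕ → ℕ satisfy: v 5 ≥ 3, ν 5 ≥ 26, w 7 ≥ 4; for every natural number n with 6 ≤ n ≤ 12: (i) a (n−1) ≥ ν (n−1) + 1; (ii) 2·(n−1)·(v n) ≥ a (n−1) · v (n−1); (iii) ν n + 2·n ≥ 2·ν (n−1) + 5; (iv) ν n ≥ a (n−1) + v n; and for every natural number n with 8 ≤ n ≤ 12: (v) n·(w n) ≥ a (n−1) · w (n−1). Then w 8 ≥ 41. -/
import Mathlib


/-- Lower bound for the number of finite vertices in dimension 8. -/
theorem finite_vertices_dim8 (a ν v w : ℕ → ℕ)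
    (hv5 : 3 ≤ v 5) (hν5 : 26 ≤ ν 5) (hw7 : 4 ≤ w 7)
    (hi : ∀ n : ℕ, 6 ≤ n → n ≤ 12 → ν (n - 1) + 1 ≤ a (n - 1))
    (hii : ∀ n : ℕ, 6 ≤ n → n ≤ 12 → a (n - 1) * v (n - 1) ≤ 2 * (n - 1) * v n)
    (hiii : ∀ n : ℕ, 6 ≤ n → n ≤ 12 → 2 * ν (n - 1) + 5 ≤ ν n + 2 * n)
    (hiv : ∀ n : ℕ, 6 ≤ n → n ≤ 12 → a (n - 1) + v n ≤ ν n)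
    (hv' : ∀ n : ℕ, 8 ≤ n → n ≤ 12 → a (n - 1) * w (n - 1) ≤ n * w n) :
    41 ≤ w 8 := by
  have ha5 : 27 ≤ a 5 := by
    have h := hi 6 (by norm_num) (by norm_num)
    simp only [show (6:ℕ) - 1 = 5 from rfl] at h
    omega
  have hv6 : 9 ≤ v 6 := by
    have h := hii 6 (by norm_num) (by norm_num)
    have : 27 * 3 ≤ a 5 * v 5 := Nat.mul_le_mul ha5 hv5
    simp only [show (6:ℕ) - 1 = 5 from rfl] at h
    omega
  have hν6 : 45 ≤ ν 6 := by
    have h := hiii 6 (by norm_num) (by norm_num)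
    simp only [show (6:ℕ) - 1 = 5 from rfl] at h
    omega
  have ha6 : 46 ≤ a 6 := by
    have h := hi 7 (by norm_num) (by norm_num)
    simp only [show (7:ℕ) - 1 = 6 from rfl] at h
    omega
  have hv7 : 35 ≤ v 7 := by
    have h := hii 7 (by norm_num) (by norm_num)
    have : 46 * 9 ≤ a 6 * v 6 := Nat.mul_le_mul ha6 hv6
    simp only [show (7:ℕ) - 1 = 6 from rfl] at h
    omega
  have hν7 : 81 ≤ ν 7 := by
    have h := hiv 7 (by norm_num) (by norm_num)
    simp only [show (7:ℕ) - 1 = 6 from rfl] at h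
    omega
  have ha7 : 82 ≤ a 7 := by
    have h := hi 8 (by norm_num) (by norm_num)
    simp only [show (8:ℕ) - 1 = 7 from rfl] at h
    omega
  have h := hv' 8 (by norm_num) (by norm_num)
  have : 82 * 4 ≤ a 7 * w 7 := Nat.mul_le_mul ha7 hw7
  simp only [show (8:ℕ) - 1 = 7 from rfl] at h
  omega
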